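/- Concatenating interpolation–update–interpolation for the azimuthally discretized advection equation yields the discrete identity: (ψ^{n+1}_i − ψ^n_i)/Δt + Ω_i·∇ψ^n_i = (a(1−a)/Δt)(ψ^n_{i+1} − 2ψ^n_i + ψ^n_{i−1}) − a(1−a)(Ω_i^δ·∇ψ^n_{i+1} + Ω_{i−1}^δ·∇ψ^n_{i−1}) − ((1−a)²Ω_i^δ + a²Ω_{i−1}^δ − Ω_i)·∇ψ^n_i, where ψ^{n+1}_i is defined by applying interpolation with weights (1−a, a), the explicit Euler advection update with direction Ω_j^δ, and the reverse interpolation. -/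

import Mathlib

open scoped RealInnerProductSpace

/-!
Both interpolations are affine in the values and, by linearity of the gradient, in the
gradients as well. Expanding `(1 - a) χ_i + a χ_{i-1}` therefore splits the increment
`ψ^{n+1}_i - ψ^n_i` into the second difference `a(1 - a)(ψ_{i+1} - 2ψ_i + ψ_{i-1})`, coming from
the weights `(1 - a)² + 2a(1 - a) + a² = 1`, and `Δt` times the advection terms; dividing by `Δt`
gives the identity.
-/

theorem gradient_const_mul_add_const_mul {F : Type*} [NormedAddCommGroup F]
    [InnerProductSpace ℝ F] [CompleteSpace F] (c d : ℝ) {f g : F → ℝ} {x : F}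
    (hf : DifferentiableAt ℝ f x) (hg : DifferentiableAt ℝ g x) :
    gradient (fun y => c * f y + d * g y) x = c • gradient f x + d • gradient g x := by
  have h : HasFDerivAt (fun y => c * f y + d * g y)
      (c • fderiv ℝ f x + d • fderiv ℝ g x) x :=
    (hf.hasFDerivAt.const_smul c).add (hg.hasFDerivAt.const_smul d)
  rw [h.hasGradientAt.gradient, map_add, map_smul, map_smul]
  rfl

theorem interpolate_advect_interpolate_sub_eq {ι F : Type*} [AddGroup ι] [One ι]
    [NormedAddCommGroup F] [InnerProductSpace ℝ F] [CompleteSpace F]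
    (a Δt : ℝ) (Ωδ : ι → F) (ψ χ : ι → F → ℝ) (ψ' : F → ℝ) (i : ι) (x : F)
    (hψ : ∀ j, DifferentiableAt ℝ (ψ j) x)
    (hχ : ∀ j, χ j x = (1 - a) * ψ j x + a * ψ (j + 1) x
        - Δt * ⟪Ωδ j, gradient (fun y => (1 - a) * ψ j y + a * ψ (j + 1) y) x⟫)
    (hψ' : ψ' x = (1 - a) * χ i x + a * χ (i - 1) x) :
    ψ' x - ψ i x =
      a * (1 - a) * (ψ (i + 1) x - 2 * ψ i x + ψ (i - 1) x)
        - Δt * (a * (1 - a) *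
            (⟪Ωδ i, gradient (ψ (i + 1)) x⟫ + ⟪Ωδ (i - 1), gradient (ψ (i - 1)) x⟫)
          + ⟪(1 - a) ^ 2 • Ωδ i + a ^ 2 • Ωδ (i - 1), gradient (ψ i) x⟫) := by
  have hgrad : ∀ j, gradient (fun y => (1 - a) * ψ j y + a * ψ (j + 1) y) x
      = (1 - a) • gradient (ψ j) x + a • gradient (ψ (j + 1)) x := fun j =>
    gradient_const_mul_add_const_mul _ _ (hψ j) (hψ (j + 1))
  rw [hψ', hχ, hχ, hgrad, hgrad, sub_add_cancel]
  simp only [inner_add_right, inner_add_left, real_inner_smul_right, real_inner_smul_left]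
  ring

theorem rotated_SN_discrete_concatenation_identity_general
    (N : ℕ) (a Δt : ℝ) (hΔt : 0 < Δt)
    (Ω Ωδ : ZMod N → EuclideanSpace ℝ (Fin 3))
    (ψ : ZMod N → EuclideanSpace ℝ (Fin 3) → ℝ)
    (hψ : ∀ j, Differentiable ℝ (ψ j))
    -- intermediate values on the rotated ordinates:
    (χ : ZMod N → EuclideanSpace ℝ (Fin 3) → ℝ)
    (hχ : ∀ j x, χ j x =
      (1 - a) * ψ j x + a * ψ (j + 1) x
        - Δt * ⟪Ωδ j, gradient (fun y => (1 - a) * ψ j y + a * ψ (j + 1) y) x⟫)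
    -- updated values after the reverse interpolation:
    (ψ' : ZMod N → EuclideanSpace ℝ (Fin 3) → ℝ)
    (hψ' : ∀ i x, ψ' i x = (1 - a) * χ i x + a * χ (i - 1) x) :
    ∀ (i : ZMod N) (x : EuclideanSpace ℝ (Fin 3)),
      (ψ' i x - ψ i x) / Δt + ⟪Ω i, gradient (ψ i) x⟫ =
        (a * (1 - a) / Δt) * (ψ (i + 1) x - 2 * ψ i x + ψ (i - 1) x)
          - a * (1 - a) *
            (⟪Ωδ i, gradient (ψ (i + 1)) x⟫ + ⟪Ωδ (i - 1), gradient (ψ (i - 1)) x⟫)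
          - ⟪(1 - a) ^ 2 • Ωδ i + a ^ 2 • Ωδ (i - 1) - Ω i, gradient (ψ i) x⟫ := by
  intro i x
  rw [interpolate_advect_interpolate_sub_eq a Δt Ωδ ψ χ (ψ' i) i x
    (fun j => (hψ j).differentiableAt) (fun j => hχ j x) (hψ' i x), inner_sub_left]
  field_simp
  ring

/-- Modified-equation identity for the concatenation
interpolation → explicit-Euler advection update → reverse interpolation in the
azimuthally discretized advection equation. -/
theorem rotated_SN_discrete_concatenation_identity
    (N : ℕ) [NeZero N] (a Δt : ℝ) (ha : 0 < a) (ha' : a < 1) (hΔt : 0 < Δt)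
    (Ω Ωδ : ZMod N → EuclideanSpace ℝ (Fin 3))
    (ψ : ZMod N → EuclideanSpace ℝ (Fin 3) → ℝ)
    (hψ : ∀ j, Differentiable ℝ (ψ j))
    -- intermediate values on the rotated ordinates:
    (χ : ZMod N → EuclideanSpace ℝ (Fin 3) → ℝ)
    (hχ : ∀ j x, χ j x =
      (1 - a) * ψ j x + a * ψ (j + 1) x
        - Δt * ⟪Ωδ j, gradient (fun y => (1 - a) * ψ j y + a * ψ (j + 1) y) x⟫)
    -- updated values after the reverse interpolation:
    (ψ' : ZMod N → EuclideanSpace ℝ (Fin 3) → ℝ)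
    (hψ' : ∀ i x, ψ' i x = (1 - a) * χ i x + a * χ (i - 1) x) :
    ∀ (i : ZMod N) (x : EuclideanSpace ℝ (Fin 3)),
      (ψ' i x - ψ i x) / Δt + ⟪Ω i, gradient (ψ i) x⟫ =
        (a * (1 - a) / Δt) * (ψ (i + 1) x - 2 * ψ i x + ψ (i - 1) x)
          - a * (1 - a) *
            (⟪Ωδ i, gradient (ψ (i + 1)) x⟫ + ⟪Ωδ (i - 1), gradient (ψ (i - 1)) x⟫)
          - ⟪(1 - a) ^ 2 • Ωδ i + a ^ 2 • Ωδ (i - 1) - Ω i, gradient (ψ i) x⟫ :=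
  rotated_SN_discrete_concatenation_identity_general N a Δt hΔt Ω Ωδ ψ hψ χ hχ ψ' hψ'
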